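/- arXiv:2004.05307 — 2 statements merged into one kernel-verified Lean document; each statement's English description precedes it below -/
import Mathlib

section
/- Let χ²_d(κ) be a noncentral chi-square random variable with d degrees of freedom and noncentrality parameter κ. Then for any x > 0, Pr(χ²_d(κ) < d + κ − √((4d + 8κ)x)) ≤ exp(−x). -/
/-!
Chernoff's bound for the lower tail: for `t ≥ 0`, `P(S < c) ≤ exp (t c) · E exp (-t S)`, where
`S = ∑ (Z_i + μ_i)²`. The Laplace transform factorises over the coordinates, and a Gaussian
integral gives `E exp (-t (Z + m)²) = exp (-t m² / (1 + 2t)) / √(1 + 2t)`. Using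
`log (1 + 2t) ≥ 2t - 2t²` and `1 / (1 + 2t) ≥ 1 - 2t`, this gives
`log E exp (-t S) ≤ -t (d + κ) + t² (d + 2κ)`, and the choice
`t = √((4d + 8κ) x) / (2 (d + 2κ))` makes the exponent of the Chernoff bound at most `-x`.
-/

open MeasureTheory ProbabilityTheory Real

theorem integral_exp_neg_mul_sq_add_gaussianReal {t : ℝ} (ht : 0 < 1 + 2 * t) (m : ℝ) :
    ∫ z, exp (-t * (z + m) ^ 2) ∂gaussianReal 0 1 =
      exp (-t * m ^ 2 / (1 + 2 * t)) / √(1 + 2 * t) := by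
  have hdensity : ∀ z, gaussianPDFReal 0 1 z * exp (-t * (z + m) ^ 2) =
      ((√(2 * π))⁻¹ * exp (-t * m ^ 2 / (1 + 2 * t))) *
        exp (-((1 + 2 * t) / 2) * (z + 2 * t * m / (1 + 2 * t)) ^ 2) := by
    intro z
    simp only [gaussianPDFReal, NNReal.coe_one, mul_one, sub_zero]
    rw [mul_assoc, ← exp_add, mul_assoc, ← exp_add]
    congr 2
    field_simp
    ring
  rw [integral_gaussianReal_eq_integral_smul one_ne_zero]
  simp_rw [smul_eq_mul, hdensity]
  rw [integral_const_mul, integral_add_right_eq_self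
      (fun z => exp (-((1 + 2 * t) / 2) * z ^ 2)), integral_gaussian,
    show π / ((1 + 2 * t) / 2) = 2 * π / (1 + 2 * t) by field_simp,
    sqrt_div (by positivity)]
  field_simp

theorem exp_neg_mul_sq_div_div_sqrt_le {t : ℝ} (ht : 0 ≤ t) (m : ℝ) :
    exp (-t * m ^ 2 / (1 + 2 * t)) / √(1 + 2 * t) ≤
      exp (-t * (1 + m ^ 2) + t ^ 2 * (1 + 2 * m ^ 2)) := by
  have hs : 0 < 1 + 2 * t := by linarith
  have hlog : 2 * t - 2 * t ^ 2 ≤ log (1 + 2 * t) := by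
    refine le_trans ?_ (le_log_one_add_of_nonneg (by positivity : 0 ≤ 2 * t))
    rw [le_div_iff₀ (by positivity)]
    nlinarith [pow_nonneg ht 3]
  have hsqrt : exp (t - t ^ 2) ≤ √(1 + 2 * t) := by
    rw [sqrt_eq_rpow, ← exp_log hs, ← exp_mul]
    exact exp_le_exp.mpr (by linarith)
  have hinv : -t * m ^ 2 / (1 + 2 * t) ≤ -t * m ^ 2 + 2 * t ^ 2 * m ^ 2 := by
    rw [div_le_iff₀ hs]
    nlinarith [mul_nonneg (pow_nonneg ht 3) (sq_nonneg m)]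
  calc exp (-t * m ^ 2 / (1 + 2 * t)) / √(1 + 2 * t)
      ≤ exp (-t * m ^ 2 + 2 * t ^ 2 * m ^ 2) / exp (t - t ^ 2) := by gcongr
    _ = exp (-t * (1 + m ^ 2) + t ^ 2 * (1 + 2 * m ^ 2)) := by rw [← exp_sub]; ring_nf

theorem integral_exp_neg_mul_sum_sq_add_le {ι : Type*} [Fintype ι] (μ : ι → ℝ) {t : ℝ}
    (ht : 0 ≤ t) :
    ∫ z, exp (-t * ∑ i, (z i + μ i) ^ 2) ∂(Measure.pi fun _ : ι => gaussianReal 0 1) ≤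
      exp (-t * (Fintype.card ι + ∑ i, μ i ^ 2) +
        t ^ 2 * (Fintype.card ι + 2 * ∑ i, μ i ^ 2)) := by
  have hfactor : ∀ z : ι → ℝ,
      exp (-t * ∑ i, (z i + μ i) ^ 2) = ∏ i, exp (-t * (z i + μ i) ^ 2) := by
    intro z
    rw [← exp_sum, Finset.mul_sum]
  simp_rw [hfactor]
  rw [integral_fintype_prod_eq_prod (fun i y => exp (-t * (y + μ i) ^ 2))]
  calc ∏ i, ∫ y, exp (-t * (y + μ i) ^ 2) ∂gaussianReal 0 1
      = ∏ i, exp (-t * μ i ^ 2 / (1 + 2 * t)) / √(1 + 2 * t) := by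
        simp_rw [integral_exp_neg_mul_sq_add_gaussianReal (by linarith : 0 < 1 + 2 * t)]
    _ ≤ ∏ i, exp (-t * (1 + μ i ^ 2) + t ^ 2 * (1 + 2 * μ i ^ 2)) :=
        Finset.prod_le_prod (fun i _ => by positivity)
          fun i _ => exp_neg_mul_sq_div_div_sqrt_le ht (μ i)
    _ = _ := by
        rw [← exp_sum]
        congr 1
        simp only [Finset.sum_add_distrib, ← Finset.mul_sum, Finset.sum_const,
          Finset.card_univ, nsmul_eq_mul]
        ring

theorem integrable_exp_neg_mul_sum_sq_add {ι : Type*} [Fintype ι] {P : Measure (ι → ℝ)}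
    [IsFiniteMeasure P] (μ : ι → ℝ) {t : ℝ} (ht : 0 ≤ t) :
    Integrable (fun z : ι → ℝ => exp (-t * ∑ i, (z i + μ i) ^ 2)) P := by
  refine (integrable_const (1 : ℝ)).mono' (Measurable.aestronglyMeasurable (by fun_prop))
    (Filter.Eventually.of_forall fun z => ?_)
  rw [norm_of_nonneg (exp_nonneg _), exp_le_one_iff]
  exact mul_nonpos_of_nonpos_of_nonneg (neg_nonpos.mpr ht) (by positivity)

theorem measure_lt_le_exp_mul_integral_exp_neg {Ω : Type*} [MeasurableSpace Ω] {P : Measure Ω}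
    [IsFiniteMeasure P] {X : Ω → ℝ} {t : ℝ} (ht : 0 ≤ t)
    (hint : Integrable (fun ω => exp (-t * X ω)) P) (c : ℝ) :
    P {ω | X ω < c} ≤ ENNReal.ofReal (exp (t * c) * ∫ ω, exp (-t * X ω) ∂P) := by
  calc P {ω | X ω < c} ≤ P {ω | X ω ≤ c} := measure_mono fun ω (hω : X ω < c) => hω.le
    _ = ENNReal.ofReal (P.real {ω | X ω ≤ c}) := (ofReal_measureReal).symm
    _ ≤ ENNReal.ofReal (exp (t * c) * ∫ ω, exp (-t * X ω) ∂P) := by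
      refine ENNReal.ofReal_le_ofReal ?_
      simpa [mgf] using measure_le_le_exp_mul_mgf (X := X) c (neg_nonpos.mpr ht) hint

theorem noncentral_chisq_lower_tail_general
    (d : ℕ) (hd : 0 < d) (μ : Fin d → ℝ) (κ : ℝ) (hκ : κ = ∑ i, (μ i) ^ 2)
    (x : ℝ) :
    (Measure.pi fun _ : Fin d => gaussianReal 0 1)
      {z : Fin d → ℝ |
        ∑ i, (z i + μ i) ^ 2 < (d : ℝ) + κ - Real.sqrt ((4 * d + 8 * κ) * x)}
      ≤ ENNReal.ofReal (Real.exp (-x)) := by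
  set a := √((4 * d + 8 * κ) * x)
  have hκ0 : 0 ≤ κ := hκ ▸ Finset.sum_nonneg fun i _ => sq_nonneg _
  have hD : 0 < (d : ℝ) + 2 * κ := by positivity
  set t := a / (2 * (d + 2 * κ))
  have ht : 0 ≤ t := by positivity
  have ha : (4 * d + 8 * κ) * x ≤ a ^ 2 :=
    sq_sqrt' (x := (4 * d + 8 * κ) * x) ▸ le_max_left _ _
  have hexponent : t * (d + κ - a) + (-t * (d + κ) + t ^ 2 * (d + 2 * κ)) ≤ -x := by
    have hat : a = 2 * (d + 2 * κ) * t := (mul_div_cancel₀ a (by positivity)).symm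
    rw [hat] at ha ⊢
    nlinarith
  refine (measure_lt_le_exp_mul_integral_exp_neg ht
    (integrable_exp_neg_mul_sum_sq_add μ ht) _).trans (ENNReal.ofReal_le_ofReal ?_)
  calc exp (t * (d + κ - a)) * ∫ z, exp (-t * ∑ i, (z i + μ i) ^ 2)
        ∂(Measure.pi fun _ : Fin d => gaussianReal 0 1)
      ≤ exp (t * (d + κ - a)) * exp (-t * (d + κ) + t ^ 2 * (d + 2 * κ)) := by
        gcongr
        simpa [hκ] using integral_exp_neg_mul_sum_sq_add_le μ ht
    _ ≤ exp (-x) := by rw [← exp_add]; exact exp_le_exp.mpr hexponent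

/-- Lower tail bound for a noncentral chi-square random variable (Laurent–Massart).
`χ²_d(κ)` is realized as `∑ (Z_i + μ_i)²` with `Z` a `d`-dimensional standard Gaussian
and `∑ μ_i² = κ`. -/
theorem noncentral_chisq_lower_tail
    (d : ℕ) (hd : 0 < d) (μ : Fin d → ℝ) (κ : ℝ) (hκ : κ = ∑ i, (μ i) ^ 2)
    (x : ℝ) (hx : 0 < x) :
    (Measure.pi fun _ : Fin d => gaussianReal 0 1)
      {z : Fin d → ℝ |
        ∑ i, (z i + μ i) ^ 2 < (d : ℝ) + κ - Real.sqrt ((4 * d + 8 * κ) * x)}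
      ≤ ENNReal.ofReal (Real.exp (-x)) :=
  noncentral_chisq_lower_tail_general d hd μ κ hκ x
end

section
/- Let τ_0 ~ Beta(1, n) and τ = τ_0^c with c ∈ (α/(α−1), (1+ω/2)/(α−1)) for constants α > 1, ω > 0. Let s_n = o(n), s_n → ∞, and set I_n = [(s_n/n)^{(1+ω/2)/(α−1)}, (s_n/n)^{α/(α−1)}]. Then −log P(τ ∈ I_n) = o(s_n log(n/s_n)) as n → ∞. -/
/-!
Pulling `I_n` back through `t ↦ t ^ c` gives `P(τ ∈ I_n) = (1 - x^γ)^n - (1 - x^θ)^n` with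
`x = s_n / n`, `γ = (1 + ω/2) / ((α-1)c) > 1` and `θ = α / ((α-1)c) < 1`. Since
`n x^θ = s_n x^(θ-1)` dominates `n x^γ = s_n x^(γ-1)`, the second power is at most half of the
first. Then `(1 - u)^n ≥ exp (-2nu)` for `u ≤ 1/2` yields
`-log P(τ ∈ I_n) ≤ log 2 + 2 s_n x^(γ-1) = o(s_n)`, while `log (n / s_n) → ∞`.
-/

open Real Filter MeasureTheory

open scoped Topology

theorem integral_Icc_natCast_mul_one_sub_pow {u v : ℝ} (huv : u ≤ v) (n : ℕ) :
    ∫ t in Set.Icc u v, (n : ℝ) * (1 - t) ^ (n - 1) = (1 - u) ^ n - (1 - v) ^ n := by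
  have hderiv : ∀ t ∈ Set.uIcc u v,
      HasDerivAt (fun t : ℝ => -(1 - t) ^ n) ((n : ℝ) * (1 - t) ^ (n - 1)) t := by
    intro t _
    have hlin : HasDerivAt (fun t : ℝ => 1 - t) (-1) t := by
      simpa using (hasDerivAt_id t).const_sub 1
    exact (hlin.fun_pow n).fun_neg.congr_deriv (by ring)
  rw [integral_Icc_eq_integral_Ioc, ← intervalIntegral.integral_of_le huv,
    intervalIntegral.integral_eq_sub_of_hasDerivAt hderiv
      ((by fun_prop : Continuous _).intervalIntegrable _ _)]
  ring

theorem Icc_inter_rpow_preimage_Icc {c u v : ℝ} (hc : 0 < c) (hu : 0 ≤ u) (huv : u ≤ v)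
    (hv : v ≤ 1) :
    Set.Icc (0 : ℝ) 1 ∩ {t : ℝ | t ^ c ∈ Set.Icc (u ^ c) (v ^ c)} = Set.Icc u v := by
  ext t
  simp only [Set.mem_inter_iff, Set.mem_Icc, Set.mem_ofPred_eq]
  constructor
  · rintro ⟨⟨ht0, -⟩, hut, htv⟩
    exact ⟨(rpow_le_rpow_iff hu ht0 hc).mp hut, (rpow_le_rpow_iff ht0 (hu.trans huv) hc).mp htv⟩
  · rintro ⟨hut, htv⟩
    have ht0 : 0 ≤ t := hu.trans hut
    exact ⟨⟨ht0, htv.trans hv⟩, rpow_le_rpow hu hut hc.le, rpow_le_rpow ht0 htv hc.le⟩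

theorem exp_neg_two_mul_le_one_sub {t : ℝ} (ht0 : 0 ≤ t) (ht : t ≤ 1 / 2) :
    exp (-(2 * t)) ≤ 1 - t := by
  have hpos : 0 < 1 - t := by linarith
  have hlog : 1 - (1 - t)⁻¹ ≤ log (1 - t) := one_sub_inv_le_log_of_pos hpos
  have hinv : (1 - t)⁻¹ ≤ 1 + 2 * t := by
    rw [inv_le_iff_one_le_mul₀ hpos]
    nlinarith
  calc exp (-(2 * t)) ≤ exp (log (1 - t)) := exp_le_exp.mpr (by linarith)
    _ = 1 - t := exp_log hpos

theorem neg_log_one_sub_pow_sub_one_sub_pow_mem_Icc {u v : ℝ} {n : ℕ} (hu0 : 0 ≤ u)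
    (hu : u ≤ 1 / 2) (hv : v ≤ 1) (hnuv : log 2 + 2 * (n * u) ≤ n * v) :
    -log ((1 - u) ^ n - (1 - v) ^ n) ∈ Set.Icc 0 (log 2 + 2 * (n * u)) := by
  set P := (1 - u) ^ n - (1 - v) ^ n
  have hu_pow : exp (-(2 * (n * u))) ≤ (1 - u) ^ n := by
    calc exp (-(2 * (n * u))) = exp (-(2 * u)) ^ n := by rw [← exp_nat_mul]; ring_nf
      _ ≤ (1 - u) ^ n := pow_le_pow_left₀ (exp_pos _).le (exp_neg_two_mul_le_one_sub hu0 hu) n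
  have hv_pow : (1 - v) ^ n ≤ exp (-(2 * (n * u))) / 2 := by
    calc (1 - v) ^ n ≤ exp (-v) ^ n := pow_le_pow_left₀ (by linarith) (one_sub_le_exp_neg v) n
      _ = exp (-(n * v)) := by rw [← exp_nat_mul]; ring_nf
      _ ≤ exp (-(log 2 + 2 * (n * u))) := exp_le_exp.mpr (by linarith)
      _ = exp (-(2 * (n * u))) / 2 := by rw [neg_add, exp_add, exp_neg, exp_log two_pos]; ring
  have hP_lower : exp (-(2 * (n * u))) / 2 ≤ P := by linarith
  have hP_pos : 0 < P := lt_of_lt_of_le (by positivity) hP_lower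
  have hP_le_one : P ≤ 1 := by
    have : (1 - u) ^ n ≤ 1 := pow_le_one₀ (by linarith) (by linarith)
    have : 0 ≤ (1 - v) ^ n := pow_nonneg (by linarith) n
    linarith
  refine ⟨neg_nonneg.mpr (log_nonpos hP_pos.le hP_le_one), ?_⟩
  have := log_le_log (by positivity) hP_lower
  rw [log_div (exp_pos _).ne' two_ne_zero, log_exp] at this
  linarith

theorem tendsto_rpow_nhdsGT_zero_nhds_zero {p : ℝ} (hp : 0 < p) :
    Tendsto (fun y : ℝ => y ^ p) (𝓝[>] 0) (𝓝 0) := by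
  have := ((continuous_id.rpow_const fun _ => Or.inr hp.le).tendsto 0).mono_left
    (nhdsWithin_le_nhds (s := Set.Ioi 0))
  simpa [zero_rpow hp.ne'] using this

theorem tendsto_log_inv_nhdsGT_zero : Tendsto (fun y : ℝ => log y⁻¹) (𝓝[>] 0) atTop :=
  tendsto_log_atTop.comp tendsto_inv_nhdsGT_zero

theorem neg_log_one_sub_rpow_pow_sub_div_mem_Icc {γ θ s x : ℝ} {n : ℕ} (hs : 1 ≤ s)
    (hnx : n * x = s) (hx : 0 < x) (hxγ : x ^ γ ≤ 1 / 2) (hxθ : x ^ θ ≤ 1)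
    (hdom : log 2 + 2 * x ^ (γ - 1) ≤ x ^ (θ - 1)) (hlog : 0 < log x⁻¹) :
    -log ((1 - x ^ γ) ^ n - (1 - x ^ θ) ^ n) / (s * log x⁻¹) ∈
      Set.Icc 0 ((log 2 + 2 * x ^ (γ - 1)) / log x⁻¹) := by
  have hscale : ∀ p : ℝ, n * x ^ p = s * x ^ (p - 1) := fun p => by
    rw [rpow_sub_one hx.ne', ← hnx]; field_simp
  have hlog2 : 0 ≤ log 2 := log_nonneg one_le_two
  have hγ : log 2 + 2 * (n * x ^ γ) ≤ s * (log 2 + 2 * x ^ (γ - 1)) := by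
    rw [hscale]; nlinarith
  have hθ : s * (log 2 + 2 * x ^ (γ - 1)) ≤ n * x ^ θ := by
    rw [hscale]; exact mul_le_mul_of_nonneg_left hdom (by linarith)
  obtain ⟨hnonneg, hle⟩ :=
    neg_log_one_sub_pow_sub_one_sub_pow_mem_Icc (rpow_nonneg hx.le γ) hxγ hxθ (hγ.trans hθ)
  have hs0 : 0 < s := by linarith
  refine ⟨div_nonneg hnonneg (by positivity), ?_⟩
  calc -log ((1 - x ^ γ) ^ n - (1 - x ^ θ) ^ n) / (s * log x⁻¹)
      ≤ s * (log 2 + 2 * x ^ (γ - 1)) / (s * log x⁻¹) := by gcongr; linarith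
    _ = (log 2 + 2 * x ^ (γ - 1)) / log x⁻¹ := mul_div_mul_left _ _ hs0.ne'

theorem tendsto_neg_log_one_sub_rpow_pow_sub_div {γ θ : ℝ} (hγ : 1 < γ) (hθ0 : 0 < θ)
    (hθ1 : θ < 1) {s : ℕ → ℝ} (hs1 : ∀ n, 1 ≤ s n)
    (hso : Tendsto (fun n : ℕ => s n / n) atTop (𝓝 0)) :
    Tendsto (fun n : ℕ => -log ((1 - (s n / n) ^ γ) ^ n - (1 - (s n / n) ^ θ) ^ n) /
      (s n * log (n / s n))) atTop (𝓝 0) := by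
  have hx : Tendsto (fun n : ℕ => s n / n) atTop (𝓝[>] 0) := by
    refine tendsto_nhdsWithin_iff.mpr ⟨hso, ?_⟩
    filter_upwards [eventually_ge_atTop 1] with n hn
    exact div_pos (one_pos.trans_le (hs1 n)) (by exact_mod_cast hn)
  have hsmall : ∀ᶠ y in 𝓝[>] (0 : ℝ), 0 < y ∧ y ^ γ ≤ 1 / 2 ∧ y ^ θ ≤ 1 ∧
      log 2 + 2 * y ^ (γ - 1) ≤ y ^ (θ - 1) ∧ 0 < log y⁻¹ := by
    filter_upwards [self_mem_nhdsWithin,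
      (tendsto_rpow_nhdsGT_zero_nhds_zero (p := γ) (by linarith)).eventually_le_const
        one_half_pos,
      (tendsto_rpow_nhdsGT_zero_nhds_zero hθ0).eventually_le_const one_pos,
      (tendsto_rpow_nhdsGT_zero_nhds_zero (p := γ - 1) (by linarith)).eventually_le_const
        one_half_pos,
      (tendsto_rpow_neg_nhdsGT_zero (y := θ - 1) (by linarith)).eventually_ge_atTop (log 2 + 1),
      tendsto_log_inv_nhdsGT_zero.eventually_gt_atTop 0]
      with y hy hyγ hyθ hyγ₁ hyθ₁ hlog
    exact ⟨hy, hyγ, hyθ, by linarith, hlog⟩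
  have hlimit :
      Tendsto (fun y : ℝ => (log 2 + 2 * y ^ (γ - 1)) / log y⁻¹) (𝓝[>] 0) (𝓝 0) :=
    ((tendsto_rpow_nhdsGT_zero_nhds_zero (p := γ - 1) (by linarith)).const_mul 2
      |>.const_add (log 2)).div_atTop tendsto_log_inv_nhdsGT_zero
  have hbounds : ∀ᶠ n : ℕ in atTop,
      -log ((1 - (s n / n) ^ γ) ^ n - (1 - (s n / n) ^ θ) ^ n) / (s n * log (n / s n)) ∈
        Set.Icc 0 ((log 2 + 2 * (s n / n) ^ (γ - 1)) / log (s n / n)⁻¹) := by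
    filter_upwards [hx.eventually hsmall, eventually_ge_atTop 1]
      with n ⟨hx0, hxγ, hxθ, hdom, hlog⟩ hn
    rw [← inv_div (s n)]
    have hn0 : (n : ℝ) ≠ 0 := by positivity
    exact neg_log_one_sub_rpow_pow_sub_div_mem_Icc (hs1 n) (mul_div_cancel₀ _ hn0) hx0 hxγ hxθ
      hdom hlog
  exact tendsto_of_tendsto_of_tendsto_of_le_of_le' tendsto_const_nhds (hlimit.comp hx)
    (hbounds.mono fun _ h => h.1) (hbounds.mono fun _ h => h.2)

theorem beta_prior_optimal_range_mass_general
    (α ω c : ℝ) (hα : 1 < α)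
    (hc : c ∈ Set.Ioo (α / (α - 1)) ((1 + ω / 2) / (α - 1)))
    (s : ℕ → ℝ) (hs1 : ∀ n, 1 ≤ s n)
    (hso : Tendsto (fun n : ℕ => s n / n) atTop (nhds 0))
    (P : ℕ → ℝ)
    (hP : ∀ n : ℕ, P n =
      ∫ t in Set.Icc (0 : ℝ) 1 ∩
          {t : ℝ | t ^ c ∈ Set.Icc ((s n / n) ^ ((1 + ω / 2) / (α - 1)))
            ((s n / n) ^ (α / (α - 1)))},
        (n : ℝ) * (1 - t) ^ (n - 1)) :
    Tendsto (fun n : ℕ => (-Real.log (P n)) / (s n * Real.log (n / s n)))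
      atTop (nhds 0) := by
  obtain ⟨hc1, hc2⟩ := hc
  have hα1 : 0 < α - 1 := by linarith
  have hc0 : 0 < c := (div_pos (by linarith) hα1).trans hc1
  have hγ : 1 < (1 + ω / 2) / ((α - 1) * c) := by
    rw [one_lt_div (by positivity)]
    rwa [lt_div_iff₀ hα1, mul_comm] at hc2
  have hθ : α / ((α - 1) * c) < 1 := by
    rw [div_lt_one (by positivity)]
    rwa [div_lt_iff₀ hα1, mul_comm] at hc1
  refine Tendsto.congr' ?_
    (tendsto_neg_log_one_sub_rpow_pow_sub_div hγ (by positivity) hθ hs1 hso)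
  filter_upwards [eventually_ge_atTop 1, hso.eventually_le_const one_pos] with n hn hx1
  have hx0 : 0 < s n / n := div_pos (one_pos.trans_le (hs1 n)) (by exact_mod_cast hn)
  have hpow : ∀ a, (s n / n) ^ (a / (α - 1)) = ((s n / n) ^ (a / ((α - 1) * c))) ^ c := by
    intro a
    rw [← rpow_mul hx0.le]
    field_simp
  rw [hP n, hpow, hpow, Icc_inter_rpow_preimage_Icc hc0 (rpow_nonneg hx0.le _)
    (rpow_le_rpow_of_exponent_ge hx0 hx1 (by linarith)) (rpow_le_one hx0.le hx1 (by positivity)),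
    integral_Icc_natCast_mul_one_sub_pow (rpow_le_rpow_of_exponent_ge hx0 hx1 (by linarith))]

/-- The Beta modeling `τ = τ₀^c`, `τ₀ ~ Beta(1,n)`, places enough mass on the optimal
range `I_n = [(s_n/n)^{(1+ω/2)/(α−1)}, (s_n/n)^{α/(α−1)}]`:
`−log P(τ ∈ I_n) = o(s_n log(n/s_n))`. -/
theorem beta_prior_optimal_range_mass
    (α ω c : ℝ) (hα : 1 < α) (hω : 0 < ω)
    (hc : c ∈ Set.Ioo (α / (α - 1)) ((1 + ω / 2) / (α - 1)))
    (s : ℕ → ℝ) (hs1 : ∀ n, 1 ≤ s n)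
    (hso : Tendsto (fun n : ℕ => s n / n) atTop (nhds 0))
    (hsi : Tendsto s atTop atTop)
    (P : ℕ → ℝ)
    (hP : ∀ n : ℕ, P n =
      ∫ t in Set.Icc (0 : ℝ) 1 ∩
          {t : ℝ | t ^ c ∈ Set.Icc ((s n / n) ^ ((1 + ω / 2) / (α - 1)))
            ((s n / n) ^ (α / (α - 1)))},
        (n : ℝ) * (1 - t) ^ (n - 1)) :
    Tendsto (fun n : ℕ => (-Real.log (P n)) / (s n * Real.log (n / s n)))
      atTop (nhds 0) :=
  beta_prior_optimal_range_mass_general α ω c hα hc s hs1 hso P hP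
end
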